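/- For every q ∈ (0, 1/√2), the three-qubit pure state |φ⟩ = √(1/2)|000⟩ + √(1/2 − q²)|101⟩ + q|111⟩ (i.e., α₀ = 1/√2, α₁ = 0, α₂ = √(1/2 − q²), α₃ = 0, α₄ = q, θ = 0) satisfies S₁₂² = S₂₃² = 2q², S₁₃² = 3 − 4q², τ₁₂ = τ₂₃ = √2 q, τ₁₃ = 1 (so f(ρ₁₂) = f(ρ₂₃) = (2 + √2 q)/3 and f(ρ₁₃) = 1), and it saturates the complementary relations: S₁₂² + S₁₃² + [3f(ρ₂₃) − 2]² = 3, S₁₃² + S₂₃² + [3f(ρ₁₂) − 2]² = 3, and S₁₃² + [3f(ρ₁₂) − 2]² + [3f(ρ₂₃) − 2]² = 3. -/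

import Mathlib

/-- Squared steering observable S₁₂² of the reduced state ρ₁₂ of the three-qubit
pure state α₀|000⟩ + α₁e^{iθ}|100⟩ + α₂|101⟩ + α₃|110⟩ + α₄|111⟩. -/
noncomputable def S12sq (a0 a1 a2 a3 a4 θ : ℝ) : ℝ :=
  1 + 8 * a0 ^ 2 * a3 ^ 2 - 4 * a0 ^ 2 * a2 ^ 2 - 4 * a1 ^ 2 * a4 ^ 2
    - 4 * a2 ^ 2 * a3 ^ 2 + 8 * a1 * a2 * a3 * a4 * Real.cos θ

/-- Squared steering observable S₁₃² of the reduced state ρ₁₃. -/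
noncomputable def S13sq (a0 a1 a2 a3 a4 θ : ℝ) : ℝ :=
  1 + 8 * a0 ^ 2 * a2 ^ 2 - 4 * a0 ^ 2 * a3 ^ 2 - 4 * a1 ^ 2 * a4 ^ 2
    - 4 * a2 ^ 2 * a3 ^ 2 + 8 * a1 * a2 * a3 * a4 * Real.cos θ

/-- Squared steering observable S₂₃² of the reduced state ρ₂₃. -/
noncomputable def S23sq (a0 a1 a2 a3 a4 θ : ℝ) : ℝ :=
  1 - 4 * a0 ^ 2 * a2 ^ 2 - 4 * a0 ^ 2 * a3 ^ 2 + 8 * a1 ^ 2 * a4 ^ 2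
    + 8 * a2 ^ 2 * a3 ^ 2 - 16 * a1 * a2 * a3 * a4 * Real.cos θ

/-- Partial tangle τ₁₂ = 2α₀√(α₃²+α₄²). -/
noncomputable def tau12 (a0 a1 a2 a3 a4 θ : ℝ) : ℝ :=
  2 * a0 * Real.sqrt (a3 ^ 2 + a4 ^ 2)

/-- Partial tangle τ₁₃ = 2α₀√(α₂²+α₄²). -/
noncomputable def tau13 (a0 a1 a2 a3 a4 θ : ℝ) : ℝ :=
  2 * a0 * Real.sqrt (a2 ^ 2 + a4 ^ 2)

/-- Partial tangle τ₂₃ = 2√(α₀²α₄²+α₁²α₄²+α₂²α₃²−2α₁α₂α₃α₄cosθ). -/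
noncomputable def tau23 (a0 a1 a2 a3 a4 θ : ℝ) : ℝ :=
  2 * Real.sqrt (a0 ^ 2 * a4 ^ 2 + a1 ^ 2 * a4 ^ 2 + a2 ^ 2 * a3 ^ 2
    - 2 * a1 * a2 * a3 * a4 * Real.cos θ)

/-- Average teleportation fidelity f(ρ₁₂), determined by τ₁₂ = 3f(ρ₁₂) − 2. -/
noncomputable def fid12 (a0 a1 a2 a3 a4 θ : ℝ) : ℝ := (tau12 a0 a1 a2 a3 a4 θ + 2) / 3

/-- Average teleportation fidelity f(ρ₁₃), determined by τ₁₃ = 3f(ρ₁₃) − 2. -/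
noncomputable def fid13 (a0 a1 a2 a3 a4 θ : ℝ) : ℝ := (tau13 a0 a1 a2 a3 a4 θ + 2) / 3

/-- Average teleportation fidelity f(ρ₂₃), determined by τ₂₃ = 3f(ρ₂₃) − 2. -/
noncomputable def fid23 (a0 a1 a2 a3 a4 θ : ℝ) : ℝ := (tau23 a0 a1 a2 a3 a4 θ + 2) / 3

section VanishingA1A3

variable (a0 a2 a4 θ : ℝ)

lemma S12sq_a1_a3_zero : S12sq a0 0 a2 0 a4 θ = 1 - 4 * a0 ^ 2 * a2 ^ 2 := by
  unfold S12sq; ring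

lemma S13sq_a1_a3_zero : S13sq a0 0 a2 0 a4 θ = 1 + 8 * a0 ^ 2 * a2 ^ 2 := by
  unfold S13sq; ring

lemma S23sq_a1_a3_zero : S23sq a0 0 a2 0 a4 θ = 1 - 4 * a0 ^ 2 * a2 ^ 2 := by
  unfold S23sq; ring

lemma tau12_a1_a3_zero : tau12 a0 0 a2 0 a4 θ = 2 * a0 * |a4| := by
  rw [tau12, zero_pow two_ne_zero, zero_add, Real.sqrt_sq_eq_abs]

lemma tau23_a1_a3_zero {a0 : ℝ} (ha0 : 0 ≤ a0) : tau23 a0 0 a2 0 a4 θ = 2 * a0 * |a4| := by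
  rw [tau23, show a0 ^ 2 * a4 ^ 2 + 0 ^ 2 * a4 ^ 2 + a2 ^ 2 * 0 ^ 2 - 2 * 0 * a2 * 0 * a4 * Real.cos θ
      = (a0 * a4) ^ 2 by ring, Real.sqrt_sq_eq_abs, abs_mul, abs_of_nonneg ha0, mul_assoc]

end VanishingA1A3

section Fidelity

variable (a0 a1 a2 a3 a4 θ : ℝ)

lemma three_mul_fid12_sub_two : 3 * fid12 a0 a1 a2 a3 a4 θ - 2 = tau12 a0 a1 a2 a3 a4 θ := by
  unfold fid12; ring

lemma three_mul_fid23_sub_two : 3 * fid23 a0 a1 a2 a3 a4 θ - 2 = tau23 a0 a1 a2 a3 a4 θ := by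
  unfold fid23; ring

end Fidelity

lemma two_mul_sqrt_half : 2 * Real.sqrt (1 / 2) = Real.sqrt 2 := by
  rw [show (2 : ℝ) = Real.sqrt 4 by norm_num, ← Real.sqrt_mul zero_le_four]; norm_num

/-- For every q ∈ (0, 1/√2), the genuinely entangled three-qubit pure state
|φ⟩ = √(1/2)|000⟩ + √(1/2 − q²)|101⟩ + q|111⟩ (i.e. α₀ = √(1/2), α₁ = 0,
α₂ = √(1/2 − q²), α₃ = 0, α₄ = q, θ = 0) satisfies S₁₂² = S₂₃² = 2q²,
S₁₃² = 3 − 4q², τ₁₂ = τ₂₃ = √2 q, τ₁₃ = 1 (so f(ρ₁₂) = f(ρ₂₃) = (2+√2 q)/3 and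
f(ρ₁₃) = 1), and it saturates the complementary relations:
S₁₂² + S₁₃² + [3f(ρ₂₃)−2]² = 3, S₁₃² + S₂₃² + [3f(ρ₁₂)−2]² = 3, and
S₁₃² + [3f(ρ₁₂)−2]² + [3f(ρ₂₃)−2]² = 3. -/
theorem stmt16 (q : ℝ) (hq0 : 0 < q) (hq1 : q < 1 / Real.sqrt 2)
    (a0 a1 a2 a3 a4 θ : ℝ)
    (ha0 : a0 = Real.sqrt (1 / 2)) (ha1 : a1 = 0) (ha2 : a2 = Real.sqrt (1 / 2 - q ^ 2))
    (ha3 : a3 = 0) (ha4 : a4 = q) (hθ : θ = 0) :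
    S12sq a0 a1 a2 a3 a4 θ = 2 * q ^ 2 ∧
    S23sq a0 a1 a2 a3 a4 θ = 2 * q ^ 2 ∧
    S13sq a0 a1 a2 a3 a4 θ = 3 - 4 * q ^ 2 ∧
    tau12 a0 a1 a2 a3 a4 θ = Real.sqrt 2 * q ∧
    tau23 a0 a1 a2 a3 a4 θ = Real.sqrt 2 * q ∧
    tau13 a0 a1 a2 a3 a4 θ = 1 ∧
    fid12 a0 a1 a2 a3 a4 θ = (2 + Real.sqrt 2 * q) / 3 ∧
    fid23 a0 a1 a2 a3 a4 θ = (2 + Real.sqrt 2 * q) / 3 ∧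
    fid13 a0 a1 a2 a3 a4 θ = 1 ∧
    S12sq a0 a1 a2 a3 a4 θ + S13sq a0 a1 a2 a3 a4 θ
        + (3 * fid23 a0 a1 a2 a3 a4 θ - 2) ^ 2 = 3 ∧
    S13sq a0 a1 a2 a3 a4 θ + S23sq a0 a1 a2 a3 a4 θ
        + (3 * fid12 a0 a1 a2 a3 a4 θ - 2) ^ 2 = 3 ∧
    S13sq a0 a1 a2 a3 a4 θ + (3 * fid12 a0 a1 a2 a3 a4 θ - 2) ^ 2
        + (3 * fid23 a0 a1 a2 a3 a4 θ - 2) ^ 2 = 3 := by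
  subst ha1 ha3 hθ a4
  rw [one_div, ← Real.sqrt_inv, Real.lt_sqrt hq0.le] at hq1
  have ha0_nonneg : 0 ≤ a0 := ha0 ▸ Real.sqrt_nonneg _
  have ha0_sq : a0 ^ 2 = 1 / 2 := by rw [ha0, Real.sq_sqrt (by norm_num)]
  have ha2_sq : a2 ^ 2 = 1 / 2 - q ^ 2 := by rw [ha2, Real.sq_sqrt (by norm_num; linarith)]
  have hsq : (Real.sqrt 2 * q) ^ 2 = 2 * q ^ 2 := by rw [mul_pow, Real.sq_sqrt zero_le_two]
  have hS12 : S12sq a0 0 a2 0 q 0 = 2 * q ^ 2 := by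
    rw [S12sq_a1_a3_zero, ha0_sq, ha2_sq]; ring
  have hS23 : S23sq a0 0 a2 0 q 0 = 2 * q ^ 2 := by
    rw [S23sq_a1_a3_zero, ha0_sq, ha2_sq]; ring
  have hS13 : S13sq a0 0 a2 0 q 0 = 3 - 4 * q ^ 2 := by
    rw [S13sq_a1_a3_zero, ha0_sq, ha2_sq]; ring
  have htau12 : tau12 a0 0 a2 0 q 0 = Real.sqrt 2 * q := by
    rw [tau12_a1_a3_zero, abs_of_pos hq0, ha0, two_mul_sqrt_half]
  have htau23 : tau23 a0 0 a2 0 q 0 = Real.sqrt 2 * q := by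
    rw [tau23_a1_a3_zero _ _ _ ha0_nonneg, abs_of_pos hq0, ha0, two_mul_sqrt_half]
  have htau13 : tau13 a0 0 a2 0 q 0 = 1 := by
    rw [tau13, ha2_sq, sub_add_cancel, ha0, mul_assoc, ← sq, Real.sq_sqrt (by norm_num)]; norm_num
  refine ⟨hS12, hS23, hS13, htau12, htau23, htau13, ?_, ?_, ?_, ?_, ?_, ?_⟩
  · rw [fid12, htau12, add_comm]
  · rw [fid23, htau23, add_comm]
  · rw [fid13, htau13]; norm_num
  · rw [three_mul_fid23_sub_two, hS12, hS13, htau23, hsq]; ring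
  · rw [three_mul_fid12_sub_two, hS13, hS23, htau12, hsq]; ring
  · rw [three_mul_fid12_sub_two, three_mul_fid23_sub_two, hS13, htau12, htau23, hsq]; ring
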